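/- Let D, d₁, d₂ be positive integers and let ℓ = (α₁,…,α_D) be a random vector in ℝ^D whose coordinates are independent and identically distributed with E[α_j] = 0, E[α_j²] = 1, and E[α_j⁴] = γ (and finite fourth moment). Let M₁ ∈ ℝ^{D×d₁} and M₂ ∈ ℝ^{D×d₂} be deterministic matrices with rows m_{1j}ᵀ and m_{2j}ᵀ respectively. Then E[(M₁ᵀ ℓ ℓᵀ M₂)(M₂ᵀ ℓ ℓᵀ M₁)] = M₁ᵀ[(γ − 3)·W₂ + 2·M₂M₂ᵀ + tr(M₂M₂ᵀ)·I_D]·M₁, where W₂ = diag(m_{21}ᵀm_{21}, …, m_{2D}ᵀm_{2D}). -/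

import Mathlib

/-!
With `A = M₂ M₂ᵀ`, the random matrix is `M₁ᵀ (ℓᵀ A ℓ) ℓ ℓᵀ M₁`, so everything reduces to the
entries `E[(ℓᵀ A ℓ) α_a α_d] = ∑_{b,c} A_bc E[α_a α_b α_c α_d]`. By independence and
`E α = 0`, a mixed fourth moment vanishes unless its indices pair up, which gives
`E[α_a α_b α_c α_d] = δ_ab δ_cd + δ_ac δ_bd + δ_ad δ_bc + (γ - 3) δ_abcd`; summing against `A`
yields `A + Aᵀ + tr A · I + (γ - 3) diag A`, and `A` is symmetric with `A_kk = m₂ₖᵀ m₂ₖ`.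
-/

open MeasureTheory ProbabilityTheory Matrix

lemma dotProduct_vecMul_smul_vecMulVec_apply {ι α : Type*} [CommSemiring α] [Fintype ι]
    (v : ι → α) (A : Matrix ι ι α) (a d : ι) :
    ((v ᵥ* A ⬝ᵥ v) • vecMulVec v v) a d = ∑ b, ∑ c, A b c * (v a * v b * v c * v d) := by
  simp only [Matrix.smul_apply, vecMulVec_apply, dotProduct, vecMul, smul_eq_mul, Finset.sum_mul]
  rw [Finset.sum_comm]
  exact Finset.sum_congr rfl fun b _ => Finset.sum_congr rfl fun c _ => by ring

lemma abs_mul_mul_mul_le_sum_pow_four {α : Type*} [CommRing α] [LinearOrder α]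
    [IsStrictOrderedRing α] (x y z w : α) :
    |x * y * z * w| ≤ x ^ 4 + y ^ 4 + z ^ 4 + w ^ 4 := by
  rw [abs_le]
  constructor <;> nlinarith [sq_nonneg (x * y - z * w), sq_nonneg (x * y + z * w),
    sq_nonneg (x ^ 2 - y ^ 2), sq_nonneg (z ^ 2 - w ^ 2)]

section FourthMoments

variable {Ω ι : Type*} [MeasurableSpace Ω] {μ : Measure Ω} {ℓ : Ω → ι → ℝ}

lemma integral_mul_mul_mul_eq_zero_of_ne (hmeas : ∀ j, Measurable fun ω => ℓ ω j)
    (hindep : iIndepFun (fun j ω => ℓ ω j) μ) (hmean : ∀ j, ∫ ω, ℓ ω j ∂μ = 0)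
    {a b c d : ι} (had : a ≠ d) (hbd : b ≠ d) (hcd : c ≠ d) :
    ∫ ω, ℓ ω a * ℓ ω b * ℓ ω c * ℓ ω d ∂μ = 0 := by
  classical
  have hdisj : Disjoint ({a, b, c} : Finset ι) {d} := by simp [had.symm, hbd.symm, hcd.symm]
  have hindep' : IndepFun (fun ω => ℓ ω a * ℓ ω b * ℓ ω c) (fun ω => ℓ ω d) μ :=
    (hindep.indepFun_finset _ _ hdisj hmeas).comp
      (φ := fun v : ({a, b, c} : Finset ι) → ℝ => v ⟨a, by simp⟩ * v ⟨b, by simp⟩ * v ⟨c, by simp⟩)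
      (ψ := fun v : ({d} : Finset ι) → ℝ => v ⟨d, by simp⟩) (by fun_prop) (by fun_prop)
  rw [hindep'.integral_fun_mul_eq_mul_integral (by fun_prop) (hmeas d).aestronglyMeasurable,
    hmean d, mul_zero]

lemma integral_sq_mul_sq_of_ne (hmeas : ∀ j, Measurable fun ω => ℓ ω j)
    (hindep : iIndepFun (fun j ω => ℓ ω j) μ) (hmom2 : ∀ j, ∫ ω, ℓ ω j ^ 2 ∂μ = 1)
    {a b : ι} (hab : a ≠ b) :
    ∫ ω, ℓ ω a ^ 2 * ℓ ω b ^ 2 ∂μ = 1 := by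
  have hindep' : IndepFun (fun ω => ℓ ω a ^ 2) (fun ω => ℓ ω b ^ 2) μ :=
    (hindep.indepFun hab).comp (φ := fun t => t ^ 2) (ψ := fun t => t ^ 2) (by fun_prop)
      (by fun_prop)
  rw [hindep'.integral_fun_mul_eq_mul_integral (by fun_prop) (by fun_prop), hmom2, hmom2,
    mul_one]

lemma integral_mul_mul_mul_of_iIndepFun [DecidableEq ι] {γ : ℝ} (hmeas : ∀ j, Measurable fun ω => ℓ ω j)
    (hindep : iIndepFun (fun j ω => ℓ ω j) μ) (hmean : ∀ j, ∫ ω, ℓ ω j ∂μ = 0)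
    (hmom2 : ∀ j, ∫ ω, ℓ ω j ^ 2 ∂μ = 1) (hmom4 : ∀ j, ∫ ω, ℓ ω j ^ 4 ∂μ = γ) (a b c d : ι) :
    ∫ ω, ℓ ω a * ℓ ω b * ℓ ω c * ℓ ω d ∂μ =
      (if a = b ∧ c = d then 1 else 0) + (if a = c ∧ b = d then 1 else 0)
        + (if a = d ∧ b = c then 1 else 0) + if a = b ∧ a = c ∧ a = d then γ - 3 else 0 := by
  have zero₄ {p q r s : ι} (hp : p ≠ s) (hq : q ≠ s) (hr : r ≠ s) :
      ∫ ω, ℓ ω p * ℓ ω q * ℓ ω r * ℓ ω s ∂μ = 0 :=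
    integral_mul_mul_mul_eq_zero_of_ne hmeas hindep hmean hp hq hr
  have zero₁ {p q r s : ι} (hq : q ≠ p) (hr : r ≠ p) (hs : s ≠ p) :
      ∫ ω, ℓ ω p * ℓ ω q * ℓ ω r * ℓ ω s ∂μ = 0 := by
    rw [← zero₄ hq hr hs]; congr 1; ext ω; ring
  have zero₂ {p q r s : ι} (hp : p ≠ q) (hr : r ≠ q) (hs : s ≠ q) :
      ∫ ω, ℓ ω p * ℓ ω q * ℓ ω r * ℓ ω s ∂μ = 0 := by
    rw [← zero₄ hp hr hs]; congr 1; ext ω; ring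
  have zero₃ {p q r s : ι} (hp : p ≠ r) (hq : q ≠ r) (hs : s ≠ r) :
      ∫ ω, ℓ ω p * ℓ ω q * ℓ ω r * ℓ ω s ∂μ = 0 := by
    rw [← zero₄ hp hq hs]; congr 1; ext ω; ring
  have pair₁ {p q : ι} (h : p ≠ q) : ∫ ω, ℓ ω p * ℓ ω p * ℓ ω q * ℓ ω q ∂μ = 1 := by
    rw [← integral_sq_mul_sq_of_ne hmeas hindep hmom2 h]; congr 1; ext ω; ring
  have pair₂ {p q : ι} (h : p ≠ q) : ∫ ω, ℓ ω p * ℓ ω q * ℓ ω p * ℓ ω q ∂μ = 1 := by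
    rw [← pair₁ h]; congr 1; ext ω; ring
  have pair₃ {p q : ι} (h : p ≠ q) : ∫ ω, ℓ ω p * ℓ ω q * ℓ ω q * ℓ ω p ∂μ = 1 := by
    rw [← pair₁ h]; congr 1; ext ω; ring
  have quad (p : ι) : ∫ ω, ℓ ω p * ℓ ω p * ℓ ω p * ℓ ω p ∂μ = γ := by
    rw [← hmom4 p]; congr 1; ext ω; ring
  rcases eq_or_ne a b with rfl | hab
  · rcases eq_or_ne a c with rfl | hac
    · rcases eq_or_ne a d with rfl | had
      · simp only [quad, and_self, if_true]; ring
      · simp [zero₄ had had had, had]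
    · rcases eq_or_ne a d with rfl | had
      · simp [zero₃ hac hac hac, hac, hac.symm]
      · rcases eq_or_ne c d with rfl | hcd
        · simp [pair₁ hac, hac]
        · simp [zero₄ had had hcd, hac, had, hcd]
  · rcases eq_or_ne a c with rfl | hac
    · rcases eq_or_ne a d with rfl | had
      · simp [zero₂ hab hab hab, hab, hab.symm]
      · rcases eq_or_ne b d with rfl | hbd
        · simp [pair₂ hab, hab]
        · simp [zero₄ had hbd had, hab, had, hbd]
    · rcases eq_or_ne a d with rfl | had
      · rcases eq_or_ne b c with rfl | hbc
        · simp [pair₃ hab, hab]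
        · simp [zero₂ hab hbc.symm hab, hab, hac, hbc]
      · simp [zero₁ hab.symm hac.symm had.symm, hab, hac, had]

lemma integrable_mul_mul_mul (hmeas : ∀ j, Measurable fun ω => ℓ ω j)
    (hint4 : ∀ j, Integrable (fun ω => ℓ ω j ^ 4) μ) (a b c d : ι) :
    Integrable (fun ω => ℓ ω a * ℓ ω b * ℓ ω c * ℓ ω d) μ := by
  refine ((((hint4 a).add (hint4 b)).add (hint4 c)).add (hint4 d)).mono' (by fun_prop) ?_
  filter_upwards with ω
  exact abs_mul_mul_mul_le_sum_pow_four _ _ _ _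

lemma integrable_dotProduct_vecMul_smul_vecMulVec [Fintype ι]
    (hmeas : ∀ j, Measurable fun ω => ℓ ω j) (hint4 : ∀ j, Integrable (fun ω => ℓ ω j ^ 4) μ)
    (A : Matrix ι ι ℝ) (a d : ι) :
    Integrable (fun ω => ((ℓ ω ᵥ* A ⬝ᵥ ℓ ω) • vecMulVec (ℓ ω) (ℓ ω)) a d) μ := by
  simp_rw [dotProduct_vecMul_smul_vecMulVec_apply]
  exact integrable_finsetSum _ fun b _ => integrable_finsetSum _ fun c _ =>
    (integrable_mul_mul_mul hmeas hint4 a b c d).const_mul _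

lemma integral_dotProduct_vecMul_smul_vecMulVec [Fintype ι] [DecidableEq ι] {γ : ℝ}
    (hmeas : ∀ j, Measurable fun ω => ℓ ω j)
    (hindep : iIndepFun (fun j ω => ℓ ω j) μ) (hmean : ∀ j, ∫ ω, ℓ ω j ∂μ = 0)
    (hmom2 : ∀ j, ∫ ω, ℓ ω j ^ 2 ∂μ = 1) (hint4 : ∀ j, Integrable (fun ω => ℓ ω j ^ 4) μ)
    (hmom4 : ∀ j, ∫ ω, ℓ ω j ^ 4 ∂μ = γ) (A : Matrix ι ι ℝ) (a d : ι) :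
    ∫ ω, ((ℓ ω ᵥ* A ⬝ᵥ ℓ ω) • vecMulVec (ℓ ω) (ℓ ω)) a d ∂μ =
      (A + Aᵀ + trace A • 1 + (γ - 3) • diagonal A.diag) a d := by
  have hint (b c : ι) :
      Integrable (fun ω => A b c * (ℓ ω a * ℓ ω b * ℓ ω c * ℓ ω d)) μ :=
    (integrable_mul_mul_mul hmeas hint4 a b c d).const_mul _
  simp_rw [dotProduct_vecMul_smul_vecMulVec_apply]
  rw [integral_finsetSum _ fun b _ => integrable_finsetSum _ fun c _ => hint b c]
  simp_rw [integral_finsetSum _ fun c _ => hint _ c, integral_const_mul,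
    integral_mul_mul_mul_of_iIndepFun hmeas hindep hmean hmom2 hmom4]
  simp [mul_add, Finset.sum_add_distrib, ite_and, trace, diagonal_apply, one_apply, mul_comm]

end FourthMoments

lemma vecMulVec_mul_mul_vecMulVec {l m n p α : Type*} [CommSemiring α] [Fintype m] [Fintype n]
    (u : l → α) (v : m → α) (A : Matrix m n α) (w : n → α) (x : p → α) :
    vecMulVec u v * A * vecMulVec w x = (v ᵥ* A ⬝ᵥ w) • vecMulVec u x := by
  rw [vecMulVec_mul, vecMulVec_mul_vecMulVec, vecMulVec_smul]

lemma integral_mul_mul_apply {Ω l m n p : Type*} [MeasurableSpace Ω] {μ : Measure Ω} [Fintype m]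
    [Fintype n] {X : Ω → Matrix m n ℝ} (hX : ∀ a b, Integrable (fun ω => X ω a b) μ)
    (B : Matrix l m ℝ) (C : Matrix n p ℝ) (i : l) (j : p) :
    ∫ ω, (B * X ω * C) i j ∂μ = (B * of (fun a b => ∫ ω, X ω a b ∂μ) * C) i j := by
  simp only [mul_apply, of_apply, Finset.sum_mul]
  rw [integral_finsetSum _ fun b _ => integrable_finsetSum _ fun a _ =>
    ((hX a b).const_mul _).mul_const _]
  refine Finset.sum_congr rfl fun b _ => ?_
  rw [integral_finsetSum _ fun a _ => ((hX a b).const_mul _).mul_const _]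
  refine Finset.sum_congr rfl fun a _ => ?_
  rw [integral_mul_const, integral_const_mul]

theorem stmt_6_general {Ω : Type*} [MeasurableSpace Ω] (μ : Measure Ω)
    (D d₁ d₂ : ℕ) (γ : ℝ)
    (ℓ : Ω → Fin D → ℝ)
    (hmeas : ∀ j, Measurable fun ω => ℓ ω j)
    (hindep : iIndepFun
      (fun j ω => ℓ ω j) μ)
    (hmean : ∀ j, (∫ ω, ℓ ω j ∂μ) = 0)
    (hmom2 : ∀ j, (∫ ω, (ℓ ω j) ^ 2 ∂μ) = 1)
    (hint4 : ∀ j, Integrable (fun ω => (ℓ ω j) ^ 4) μ)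
    (hmom4 : ∀ j, (∫ ω, (ℓ ω j) ^ 4 ∂μ) = γ)
    (M₁ : Matrix (Fin D) (Fin d₁) ℝ) (M₂ : Matrix (Fin D) (Fin d₂) ℝ) :
    ∀ i j,
      (∫ ω, ((M₁ᵀ * vecMulVec (ℓ ω) (ℓ ω) * M₂) * (M₂ᵀ * vecMulVec (ℓ ω) (ℓ ω) * M₁)) i j ∂μ)
        = (M₁ᵀ * ((γ - 3) • Matrix.diagonal (fun k => M₂ k ⬝ᵥ M₂ k)
            + (2 : ℝ) • (M₂ * M₂ᵀ)
            + (Matrix.trace (M₂ * M₂ᵀ)) • (1 : Matrix (Fin D) (Fin D) ℝ)) * M₁) i j := by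
  intro i j
  have hfactor (v : Fin D → ℝ) :
      M₁ᵀ * vecMulVec v v * M₂ * (M₂ᵀ * vecMulVec v v * M₁) =
        M₁ᵀ * ((v ᵥ* (M₂ * M₂ᵀ) ⬝ᵥ v) • vecMulVec v v) * M₁ := by
    rw [← vecMulVec_mul_mul_vecMulVec]; simp only [Matrix.mul_assoc]
  have hsymm : (M₂ * M₂ᵀ)ᵀ = M₂ * M₂ᵀ := by rw [transpose_mul, transpose_transpose]
  have hdiag : (M₂ * M₂ᵀ).diag = fun k => M₂ k ⬝ᵥ M₂ k := rfl
  have hmoment : of (fun a d => ∫ ω, ((ℓ ω ᵥ* (M₂ * M₂ᵀ) ⬝ᵥ ℓ ω) • vecMulVec (ℓ ω) (ℓ ω)) a d ∂μ)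
      = (γ - 3) • diagonal (fun k => M₂ k ⬝ᵥ M₂ k) + (2 : ℝ) • (M₂ * M₂ᵀ)
        + trace (M₂ * M₂ᵀ) • 1 := by
    calc _ = M₂ * M₂ᵀ + (M₂ * M₂ᵀ)ᵀ + trace (M₂ * M₂ᵀ) • 1
          + (γ - 3) • diagonal (M₂ * M₂ᵀ).diag := Matrix.ext fun a d =>
          integral_dotProduct_vecMul_smul_vecMulVec hmeas hindep hmean hmom2 hint4 hmom4 _ a d
      _ = _ := by rw [hsymm, hdiag]; module
  simp_rw [hfactor]
  rw [integral_mul_mul_apply (integrable_dotProduct_vecMul_smul_vecMulVec hmeas hint4 _) _ _ i j,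
    hmoment]

/-- Let `ℓ = (α₁,…,α_D)` be a random vector in `ℝ^D` with i.i.d.
coordinates of mean `0`, second moment `1` and fourth moment `γ` (finite). Then for all
deterministic `M₁ ∈ ℝ^{D×d₁}` and `M₂ ∈ ℝ^{D×d₂}`,
`E[(M₁ᵀ ℓ ℓᵀ M₂)(M₂ᵀ ℓ ℓᵀ M₁)] = M₁ᵀ[(γ−3)·W₂ + 2·M₂M₂ᵀ + tr(M₂M₂ᵀ)·I_D]·M₁`,
where `W₂ = diag(m₂₁ᵀm₂₁, …, m₂_Dᵀm₂_D)` is built from the rows of `M₂`. -/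
theorem stmt_6 {Ω : Type*} [MeasurableSpace Ω] (μ : Measure Ω) [IsProbabilityMeasure μ]
    (D d₁ d₂ : ℕ) (hD : 0 < D) (hd₁ : 0 < d₁) (hd₂ : 0 < d₂) (γ : ℝ)
    (ℓ : Ω → Fin D → ℝ)
    (hmeas : ∀ j, Measurable fun ω => ℓ ω j)
    (hindep : iIndepFun
      (fun j ω => ℓ ω j) μ)
    (hident : ∀ j k, IdentDistrib (fun ω => ℓ ω j) (fun ω => ℓ ω k) μ μ)
    (hint1 : ∀ j, Integrable (fun ω => ℓ ω j) μ)
    (hmean : ∀ j, (∫ ω, ℓ ω j ∂μ) = 0)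
    (hint2 : ∀ j, Integrable (fun ω => (ℓ ω j) ^ 2) μ)
    (hmom2 : ∀ j, (∫ ω, (ℓ ω j) ^ 2 ∂μ) = 1)
    (hint4 : ∀ j, Integrable (fun ω => (ℓ ω j) ^ 4) μ)
    (hmom4 : ∀ j, (∫ ω, (ℓ ω j) ^ 4 ∂μ) = γ)
    (M₁ : Matrix (Fin D) (Fin d₁) ℝ) (M₂ : Matrix (Fin D) (Fin d₂) ℝ) :
    ∀ i j,
      (∫ ω, ((M₁ᵀ * vecMulVec (ℓ ω) (ℓ ω) * M₂) * (M₂ᵀ * vecMulVec (ℓ ω) (ℓ ω) * M₁)) i j ∂μ)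
        = (M₁ᵀ * ((γ - 3) • Matrix.diagonal (fun k => M₂ k ⬝ᵥ M₂ k)
            + (2 : ℝ) • (M₂ * M₂ᵀ)
            + (Matrix.trace (M₂ * M₂ᵀ)) • (1 : Matrix (Fin D) (Fin D) ℝ)) * M₁) i j :=
  stmt_6_general μ D d₁ d₂ γ ℓ hmeas hindep hmean hmom2 hint4 hmom4 M₁ M₂
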